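/- Let 𝔉 be a union-closed family of subsets of X = {a₁,…,aₙ}, let w = a₁a₂…aₙ, and let g ∈ 𝔉. Then the orbit { φ_{wθ}(g) : θ a permutation of X } equals the set max(Fib(g)) of maximal elements of the fiber of g. -/

import Mathlib

open Finset

variable {α : Type*} [DecidableEq α]

/-- A family is union-closed if it is closed under pairwise unions. -/
def UnionClosed (F : Finset (Finset α)) : Prop := ∀ f ∈ F, ∀ g ∈ F, f ∪ g ∈ F

/-- One rising step: φ_{S,a}(z) = z ∪ {a} if z ∪ {a} ∉ S, and z otherwise. -/
def riseStep (S : Finset (Finset α)) (a : α) (z : Finset α) : Finset α :=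
  if insert a z ∈ S then z else insert a z

/-- Iterated rising function along a word (list of letters): at each step the
current family is replaced by its image and the next letter is risen. -/
def riseWord (S : Finset (Finset α)) : List α → Finset α → Finset α
  | [], z => z
  | a :: u, z => riseWord (S.image (riseStep S a)) u (riseStep S a z)

/-- The section of a family along (a prefix of) a word. -/
def riseSections (S : Finset (Finset α)) : List α → Finset (Finset α)
  | [] => S
  | a :: u => riseSections (S.image (riseStep S a)) u

/-- The set of minimal elements of a family (under inclusion). -/
def minsF (F : Finset (Finset α)) : Finset (Finset α) :=
  F.filter fun h => ∀ g ∈ F, g ⊆ h → g = h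

/-- The operator z ↦ z* = ⋃ { h ∈ F : h ⊆ z }. -/
def starOp (F : Finset (Finset α)) (z : Finset α) : Finset α :=
  (F.filter fun f => f ⊆ z).sup id

/-- The fiber Fib(g) = { h ∈ min(F)↑ : h* = g }. -/
def FibS (F : Finset (Finset α)) (g : Finset α) : Set (Finset α) :=
  {h | (∃ m ∈ minsF F, m ⊆ h) ∧ starOp F h = g}

/-! Rising along a word only ever adds letters, and because `F` is union-closed no step can
swallow a member of the family lying above the starting set: so `φ_u(g)` always lies in `Fib(g)`.
A letter `x` missing from `φ_u(g)` was refused at its turn, which happened because some member of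
the family containing `x` fits inside `φ_u(g) ∪ {x}`; witnesses of this kind for every missing
letter characterise the maximal elements of `Fib(g)`. Conversely, a maximal `η` is reached by the
word listing the letters of `η` first (each one rises, since no member of `F` between `g` and `η`
exceeds `g`) and the remaining letters afterwards: by then the witnesses have made every
`η ∪ {x}` a member of the current family, so `η` no longer moves. -/

section Rising

variable {S : Finset (Finset α)} {a x : α} {f k z η : Finset α}

lemma subset_riseStep (S : Finset (Finset α)) (a : α) (z : Finset α) : z ⊆ riseStep S a z := by
  unfold riseStep
  split_ifs
  · exact Subset.rfl
  · exact subset_insert a z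

lemma riseStep_subset_insert (S : Finset (Finset α)) (a : α) (z : Finset α) :
    riseStep S a z ⊆ insert a z := by
  unfold riseStep
  split_ifs
  · exact subset_insert a z
  · exact Subset.rfl

lemma riseStep_of_insert_mem (h : insert a z ∈ S) : riseStep S a z = z := if_pos h

lemma riseStep_of_insert_notMem (h : insert a z ∉ S) : riseStep S a z = insert a z := if_neg h

lemma insert_mem_image_riseStep (hz : z ∈ S) : insert a z ∈ S.image (riseStep S a) := by
  by_cases h : insert a z ∈ S
  · refine mem_image.2 ⟨insert a z, h, riseStep_of_insert_mem ?_⟩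
    rwa [insert_idem]
  · exact mem_image.2 ⟨z, hz, riseStep_of_insert_notMem h⟩

theorem UnionClosed.image_riseStep (hS : UnionClosed S) (a : α) :
    UnionClosed (S.image (riseStep S a)) := by
  simp only [UnionClosed, forall_mem_image]
  intro f hf g hg
  by_cases hstay : insert a f ∈ S ∧ insert a g ∈ S
  · have hfg : insert a (f ∪ g) ∈ S := insert_union_distrib a f g ▸ hS _ hstay.1 _ hstay.2
    rw [riseStep_of_insert_mem hstay.1, riseStep_of_insert_mem hstay.2,
      ← riseStep_of_insert_mem hfg]
    exact mem_image_of_mem _ (hS f hf g hg)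
  · have ha : a ∈ riseStep S a f ∪ riseStep S a g := by
      rcases not_and_or.1 hstay with h | h
      · exact mem_union_left _ (riseStep_of_insert_notMem h ▸ mem_insert_self a f)
      · exact mem_union_right _ (riseStep_of_insert_notMem h ▸ mem_insert_self a g)
    have hrise : riseStep S a f ∪ riseStep S a g = insert a (f ∪ g) := by
      refine Subset.antisymm ?_ (insert_subset ha (union_subset_union (subset_riseStep S a f)
        (subset_riseStep S a g)))
      rw [insert_union_distrib]
      exact union_subset_union (riseStep_subset_insert S a f) (riseStep_subset_insert S a g)
    rw [hrise]
    exact insert_mem_image_riseStep (hS f hf g hg)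

lemma eq_of_subset_riseStep (hk : k ∈ S) (hzk : z ⊆ k) (hkz : k ⊆ riseStep S a z) : k = z := by
  by_cases h : insert a z ∈ S
  · exact Subset.antisymm (riseStep_of_insert_mem h ▸ hkz) hzk
  · rw [riseStep_of_insert_notMem h] at hkz
    by_cases ha : a ∈ k
    · exact absurd (Subset.antisymm hkz (insert_subset ha hzk) ▸ hk) h
    · exact Subset.antisymm ((subset_insert_iff_of_notMem ha).1 hkz) hzk

lemma UnionClosed.riseStep_union_subset (hS : UnionClosed S) (hf : f ∈ S) (a : α) (z : Finset α) :
    riseStep S a (f ∪ z) ⊆ f ∪ riseStep S a z := by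
  by_cases h : insert a z ∈ S
  · have hfz : insert a (f ∪ z) ∈ S := union_insert a f z ▸ hS f hf _ h
    rw [riseStep_of_insert_mem h, riseStep_of_insert_mem hfz]
  · rw [riseStep_of_insert_notMem h, union_insert]
    exact riseStep_subset_insert S a (f ∪ z)

lemma subset_riseWord (S : Finset (Finset α)) (u : List α) (z : Finset α) :
    z ⊆ riseWord S u z := by
  induction u generalizing S z with
  | nil => exact Subset.rfl
  | cons a u ih => exact (subset_riseStep S a z).trans (ih _ _)

lemma riseWord_subset_union (S : Finset (Finset α)) (u : List α) (z : Finset α) :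
    riseWord S u z ⊆ z ∪ u.toFinset := by
  induction u generalizing S z with
  | nil => simp [riseWord]
  | cons a u ih =>
    calc riseWord S (a :: u) z ⊆ riseStep S a z ∪ u.toFinset := ih _ _
      _ ⊆ insert a z ∪ u.toFinset := union_subset_union_left (riseStep_subset_insert S a z)
      _ = z ∪ (a :: u).toFinset := by rw [List.toFinset_cons, insert_union, union_insert]

lemma riseWord_mem_riseSections (u : List α) (hz : z ∈ S) : riseWord S u z ∈ riseSections S u := by
  induction u generalizing S z with
  | nil => exact hz
  | cons a u ih => exact ih (mem_image_of_mem _ hz)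

theorem unionClosed_riseSections (hS : UnionClosed S) (u : List α) :
    UnionClosed (riseSections S u) := by
  induction u generalizing S with
  | nil => exact hS
  | cons a u ih => exact ih (hS.image_riseStep a)

lemma riseWord_append (S : Finset (Finset α)) (u v : List α) (z : Finset α) :
    riseWord S (u ++ v) z = riseWord (riseSections S u) v (riseWord S u z) := by
  induction u generalizing S z with
  | nil => rfl
  | cons a u ih => exact ih _ _

theorem UnionClosed.subset_of_subset_riseWord (hS : UnionClosed S) (u : List α) (hz : z ∈ S)
    (hf : f ∈ S) (hfu : f ⊆ riseWord S u z) : f ⊆ z := by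
  induction u generalizing S z f with
  | nil => exact hfu
  | cons a u ih =>
    -- apply the induction hypothesis to the image of `f ∪ z`, not of `f`: it lies in the next family
    have hfz : riseStep S a (f ∪ z) ⊆ riseStep S a z :=
      ih (hS.image_riseStep a) (mem_image_of_mem _ hz) (mem_image_of_mem _ (hS f hf z hz))
        ((hS.riseStep_union_subset hf a z).trans (union_subset hfu (subset_riseWord _ u _)))
    have := eq_of_subset_riseStep (hS f hf z hz) subset_union_right
      ((subset_riseStep S a _).trans hfz)
    exact union_eq_right.1 this

lemma exists_mem_subset_insert_riseWord {u : List α} (hx : x ∈ u) (hxu : x ∉ riseWord S u z) :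
    ∃ f ∈ S, x ∈ f ∧ f ⊆ insert x (riseWord S u z) := by
  induction u generalizing S z with
  | nil => exact absurd hx List.not_mem_nil
  | cons a u ih =>
    by_cases hxa : x = a
    · subst hxa
      have hins : insert x z ∈ S := by
        by_contra h
        exact hxu (subset_riseWord _ u _ (riseStep_of_insert_notMem h ▸ mem_insert_self x z))
      exact ⟨insert x z, hins, mem_insert_self x z, insert_subset_insert x
        ((subset_riseStep S x z).trans (subset_riseWord _ u _))⟩
    · obtain ⟨f', hf', hxf', hf'u⟩ := ih ((List.mem_cons.1 hx).resolve_left hxa) hxu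
      obtain ⟨f, hf, rfl⟩ := mem_image.1 hf'
      refine ⟨f, hf, ?_, (subset_riseStep S a f).trans hf'u⟩
      exact (mem_insert.1 (riseStep_subset_insert S a f hxf')).resolve_left hxa

lemma riseWord_eq_union_toFinset {t : Finset α} (u : List α) (hzt : z ⊆ t)
    (hbelow : ∀ f ∈ S, f ⊆ t → f ⊆ z) (hut : ∀ b ∈ u, b ∈ t) :
    riseWord S u z = z ∪ u.toFinset := by
  induction u generalizing S z with
  | nil => simp [riseWord]
  | cons a u ih =>
    have hat : a ∈ t := hut a List.mem_cons_self
    have hstep : riseStep S a z = insert a z := by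
      by_cases h : insert a z ∈ S
      · rw [riseStep_of_insert_mem h]
        exact (Subset.antisymm (hbelow _ h (insert_subset hat hzt)) (subset_insert a z)).symm
      · exact riseStep_of_insert_notMem h
    have hbelow' : ∀ f ∈ S.image (riseStep S a), f ⊆ t → f ⊆ insert a z := by
      simp only [forall_mem_image]
      intro f hf hft
      exact (riseStep_subset_insert S a f).trans
        (insert_subset_insert a (hbelow f hf ((subset_riseStep S a f).trans hft)))
    change riseWord _ u (riseStep S a z) = _
    rw [hstep, ih (insert_subset hat hzt) hbelow' fun b hb => hut b (List.mem_cons_of_mem a hb),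
      List.toFinset_cons, insert_union, union_insert]

theorem UnionClosed.riseWord_eq_self (hS : UnionClosed S) (u : List α)
    (hins : ∀ x ∈ u, insert x η ∈ S) : riseWord S u η = η := by
  induction u generalizing S with
  | nil => rfl
  | cons a u ih =>
    have ha := hins a List.mem_cons_self
    change riseWord _ u (riseStep S a η) = η
    rw [riseStep_of_insert_mem ha]
    refine ih (hS.image_riseStep a) fun x hx => ?_
    have hxη := hins x (List.mem_cons_of_mem a hx)
    have haxη : insert a (insert x η) ∈ S := by
      have := hS _ ha _ hxη
      rwa [insert_union, union_insert, union_self] at this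
    exact mem_image.2 ⟨_, hxη, riseStep_of_insert_mem haxη⟩

end Rising

section Fiber

variable {F : Finset (Finset α)} {g z η : Finset α}

lemma starOp_subset (F : Finset (Finset α)) (z : Finset α) : starOp F z ⊆ z :=
  Finset.sup_le fun _ hf => (mem_filter.1 hf).2

lemma subset_starOp {f : Finset α} (hf : f ∈ F) (hfz : f ⊆ z) : f ⊆ starOp F z :=
  le_sup (f := id) (mem_filter.2 ⟨hf, hfz⟩)

lemma starOp_eq_iff (hg : g ∈ F) : starOp F z = g ↔ g ⊆ z ∧ ∀ f ∈ F, f ⊆ z → f ⊆ g := by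
  constructor
  · rintro rfl
    exact ⟨starOp_subset F z, fun f hf hfz => subset_starOp hf hfz⟩
  · rintro ⟨hgz, hbelow⟩
    refine Subset.antisymm (Finset.sup_le fun f hf => ?_) (subset_starOp hg hgz)
    exact hbelow f (mem_filter.1 hf).1 (mem_filter.1 hf).2

lemma exists_mem_minsF_subset (hg : g ∈ F) : ∃ m ∈ minsF F, m ⊆ g := by
  obtain ⟨m, hmg, hm⟩ := exists_minimal_le_of_wellFoundedLT (· ∈ F) g hg
  exact ⟨m, mem_filter.2 ⟨hm.1, fun h hh hhm => Subset.antisymm hhm (hm.2 hh hhm)⟩, hmg⟩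

lemma mem_FibS_iff (hg : g ∈ F) : z ∈ FibS F g ↔ g ⊆ z ∧ ∀ f ∈ F, f ⊆ z → f ⊆ g := by
  refine ⟨fun hz => (starOp_eq_iff hg).1 hz.2, fun hz => ⟨?_, (starOp_eq_iff hg).2 hz⟩⟩
  obtain ⟨m, hm, hmg⟩ := exists_mem_minsF_subset hg
  exact ⟨m, hm, hmg.trans hz.1⟩

theorem maximal_FibS_iff (hg : g ∈ F) :
    (η ∈ FibS F g ∧ ∀ η' ∈ FibS F g, η ⊆ η' → η' = η) ↔
      η ∈ FibS F g ∧ ∀ x ∉ η, ∃ f ∈ F, x ∈ f ∧ f ⊆ insert x η := by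
  refine and_congr_right fun hη => ?_
  obtain ⟨hgη, hbelow⟩ := (mem_FibS_iff hg).1 hη
  constructor
  · intro hmax x hx
    by_contra! hfree
    have hins : insert x η ∈ FibS F g := by
      refine (mem_FibS_iff hg).2 ⟨hgη.trans (subset_insert x η), fun f hf hfx => ?_⟩
      by_cases hxf : x ∈ f
      · exact absurd hfx (hfree f hf hxf)
      · exact hbelow f hf ((subset_insert_iff_of_notMem hxf).1 hfx)
    exact hx (hmax _ hins (subset_insert x η) ▸ mem_insert_self x η)
  · intro hsat η' hη' hηη'
    refine Subset.antisymm (fun x hx' => ?_) hηη'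
    by_contra hx
    obtain ⟨f, hf, hxf, hfx⟩ := hsat x hx
    have hfg := ((mem_FibS_iff hg).1 hη').2 f hf (hfx.trans (insert_subset hx' hηη'))
    exact hx (hgη (hfg hxf))

end Fiber

theorem UnionClosed.insert_mem_riseSections {S : Finset (Finset α)} (hS : UnionClosed S)
    {v : List α} {f η : Finset α} {x : α} (hη : η ∈ riseSections S v) (hvη : ∀ b ∈ v, b ∈ η)
    (hf : f ∈ S) (hxf : x ∈ f) (hfx : f ⊆ insert x η) : insert x η ∈ riseSections S v := by
  have hf' : riseWord S v f ⊆ insert x η :=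
    (riseWord_subset_union S v f).trans (union_subset hfx fun b hb =>
      mem_insert_of_mem (hvη b (List.mem_toFinset.1 hb)))
  have hunion : riseWord S v f ∪ η = insert x η :=
    Subset.antisymm (union_subset hf' (subset_insert x η))
      (insert_subset (mem_union_left _ (subset_riseWord S v f hxf)) subset_union_right)
  exact hunion ▸ unionClosed_riseSections hS v _ (riseWord_mem_riseSections v hf) η hη

theorem UnionClosed.riseWord_toList_append {F : Finset (Finset α)} (hF : UnionClosed F)
    {g η : Finset α} (hg : g ∈ F) (hη : η ∈ FibS F g)
    (hsat : ∀ x ∉ η, ∃ f ∈ F, x ∈ f ∧ f ⊆ insert x η) (v : List α) :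
    riseWord F (η.toList ++ v) g = η := by
  obtain ⟨hgη, hbelow⟩ := (mem_FibS_iff hg).1 hη
  have hmem : ∀ b ∈ η.toList, b ∈ η := fun b hb => mem_toList.1 hb
  have hfirst : riseWord F η.toList g = η := by
    rw [riseWord_eq_union_toFinset η.toList hgη hbelow hmem, toList_toFinset, union_eq_right.2 hgη]
  have hηS : η ∈ riseSections F η.toList := by
    simpa only [hfirst] using riseWord_mem_riseSections η.toList hg
  rw [riseWord_append, hfirst]
  refine (unionClosed_riseSections hF _).riseWord_eq_self v fun x _ => ?_
  by_cases hx : x ∈ η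
  · rwa [insert_eq_of_mem hx]
  · obtain ⟨f, hf, hxf, hfx⟩ := hsat x hx
    exact hF.insert_mem_riseSections hηS hmem hf hxf hfx

lemma exists_perm_map_eq {w L : List α} (hw : w.Nodup) (hwall : ∀ x, x ∈ w) (hL : L.Nodup)
    (hLall : ∀ x, x ∈ L) : ∃ θ : Equiv.Perm α, w.map θ = L := by
  have hlen : w.length = L.length :=
    ((List.perm_ext_iff_of_nodup hw hL).2 fun x => by simp [hwall, hLall]).length_eq
  let ew := List.Nodup.getEquivOfForallMemList w hw hwall
  let eL := List.Nodup.getEquivOfForallMemList L hL hLall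
  refine ⟨ew.symm.trans ((finCongr hlen).trans eL), List.ext_getElem (by simp [hlen]) ?_⟩
  intro i hi _
  have hwi : ew.symm w[i] = ⟨i, by simpa using hi⟩ := ew.symm_apply_eq.2 rfl
  simp [hwi, eL]

theorem stmt_8_general {α : Type*} [DecidableEq α]
    (F : Finset (Finset α)) (hF : UnionClosed F)
    (w : List α) (hnd : w.Nodup) (hall : ∀ x : α, x ∈ w)
    (g : Finset α) (hg : g ∈ F) :
    {η : Finset α | ∃ θ : Equiv.Perm α, riseWord F (w.map θ) g = η} =
    {η : Finset α | η ∈ FibS F g ∧ ∀ η' ∈ FibS F g, η ⊆ η' → η' = η} := by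
  ext η
  simp only [Set.mem_ofPred_eq, maximal_FibS_iff hg]
  constructor
  · rintro ⟨θ, rfl⟩
    have hθall : ∀ x, x ∈ w.map θ := fun x => List.mem_map.2 ⟨θ.symm x, hall _, θ.apply_symm_apply x⟩
    refine ⟨(mem_FibS_iff hg).2 ⟨subset_riseWord F _ g, fun f hf hfη => ?_⟩,
      fun x hx => exists_mem_subset_insert_riseWord (hθall x) hx⟩
    exact hF.subset_of_subset_riseWord _ hg hf hfη
  · rintro ⟨hη, hsat⟩
    let L := η.toList ++ w.filter (· ∉ η)
    have hL : L.Nodup := List.nodup_append.2 ⟨nodup_toList η, hnd.filter _,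
      fun a ha b hb hab => by simp_all⟩
    have hLall : ∀ x, x ∈ L := fun x => by by_cases hx : x ∈ η <;> simp [L, hx, hall]
    obtain ⟨θ, hθ⟩ := exists_perm_map_eq hnd hall hL hLall
    exact ⟨θ, hθ ▸ hF.riseWord_toList_append hg hη hsat _⟩

/-- Theorem 4.3: the orbit { φ_{wθ}(g) : θ ∈ 𝔖_X } equals the set of maximal
elements of the fiber Fib(g). -/
theorem stmt_8 {α : Type*} [DecidableEq α] [Fintype α]
    (F : Finset (Finset α)) (hF : UnionClosed F)
    (w : List α) (hnd : w.Nodup) (hall : ∀ x : α, x ∈ w)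
    (g : Finset α) (hg : g ∈ F) :
    {η : Finset α | ∃ θ : Equiv.Perm α, riseWord F (w.map θ) g = η} =
    {η : Finset α | η ∈ FibS F g ∧ ∀ η' ∈ FibS F g, η ⊆ η' → η' = η} :=
  stmt_8_general F hF w hnd hall g hg
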